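/- Consider a 3-candidate Borda election over {p, a, b} (scoring vector (2,1,0)) with one registered voter of weight K voting b > p > a, where k_1,…,k_t are positive integers summing to 2K, and t unregistered voters with weights k_1,…,k_t, each voting a > p > b. Then there exists a subset of the unregistered voters whose addition makes p a (tied-or-better) winner if and only if there exists a subset I ⊆ {1,…,t} with Σ_{i∈I} k_i = K. -/

import Mathlib

/-- The three candidates. -/
inductive Cand : Type
  | p | a | b
deriving DecidableEq, Repr

/-- Rank function for the preference order `b > p > a` (smaller = preferred). -/
def rBPA : Cand → ℕ := fun c => match c with | .b => 0 | .p => 1 | .a => 2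
/-- Rank function for the preference order `a > p > b`. -/
def rAPB : Cand → ℕ := fun c => match c with | .a => 0 | .p => 1 | .b => 2

/-- 3-candidate Borda score: a voter of weight ω gives `ω·(2 − rank)` points,
i.e., 2ω to its top candidate, ω to the middle one, 0 to the bottom one. -/
def bordaScore (M : Multiset (ℕ × (Cand → ℕ))) (c : Cand) : ℕ :=
  (M.map (fun v => v.1 * (2 - v.2 c))).sum

theorem bordaScore_cons_map {ι : Type*} (w : ℕ) (r : Cand → ℕ) (I : Finset ι) (k : ι → ℕ)
    (r' : Cand → ℕ) (c : Cand) :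
    bordaScore ((w, r) ::ₘ I.val.map (fun i => (k i, r'))) c =
      w * (2 - r c) + (∑ i ∈ I, k i) * (2 - r' c) := by
  simp only [bordaScore, Multiset.map_cons, Multiset.map_map, Function.comp_def,
    Multiset.sum_cons, Finset.sum_mul]
  rfl

/-- With `S` the added weight, the scores are `p : K + S`, `a : 2S`, `b : 2K`. -/
theorem forall_bordaScore_le_p_iff {ι : Type*} (K : ℕ) (I : Finset ι) (k : ι → ℕ) :
    (∀ c, bordaScore ((K, rBPA) ::ₘ I.val.map (fun i => (k i, rAPB))) c ≤
        bordaScore ((K, rBPA) ::ₘ I.val.map (fun i => (k i, rAPB))) Cand.p) ↔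
      ∑ i ∈ I, k i = K := by
  simp only [bordaScore_cons_map]
  generalize ∑ i ∈ I, k i = S
  constructor
  · intro h
    have ha := h .a
    have hb := h .b
    simp only [rBPA, rAPB] at ha hb
    omega
  · rintro rfl c
    cases c <;> simp only [rBPA, rAPB] <;> omega

theorem stmt7_general (t K : ℕ) (k : Fin t → ℕ) :
    (∃ I : Finset (Fin t),
      ∀ c, bordaScore ((K, rBPA) ::ₘ I.val.map (fun i => (k i, rAPB))) c ≤
           bordaScore ((K, rBPA) ::ₘ I.val.map (fun i => (k i, rAPB))) Cand.p) ↔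
    (∃ I : Finset (Fin t), ∑ i ∈ I, k i = K) :=
  exists_congr fun I => forall_bordaScore_le_p_iff K I k

/-- In the 3-candidate Borda election with one registered voter of weight `K`
voting `b > p > a` and unregistered voters of weights `k_1,…,k_t` voting `a > p > b`
(`Σ k_i = 2K`), some subset of the unregistered voters can be added so that `p` is a
winner iff some subset `I` of the indices satisfies `Σ_{i∈I} k_i = K`. -/
theorem stmt7 (t K : ℕ) (k : Fin t → ℕ) (hk : ∀ i, 0 < k i)
    (hsum : ∑ i, k i = 2 * K) :
    (∃ I : Finset (Fin t),
      ∀ c, bordaScore ((K, rBPA) ::ₘ I.val.map (fun i => (k i, rAPB))) c ≤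
           bordaScore ((K, rBPA) ::ₘ I.val.map (fun i => (k i, rAPB))) Cand.p) ↔
    (∃ I : Finset (Fin t), ∑ i ∈ I, k i = K) :=
  stmt7_general t K k
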